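/- For all parameters d₁ > 0 and p₁ > 0, the function d ↦ d₁/d + exp(−d/p₁)(1 − d₁/d) is strictly decreasing on the interval [d₁, ∞); that is, the LoS probability strictly decreases as the horizontal distance between transmitter and receiver grows beyond d₁. -/

import Mathlib

open Real Set

/-! Writing the LoS probability as `1 - (1 - d₁ / d) * (1 - exp (-d / p₁))`, both factors are
nonnegative and strictly increasing on `[d₁, ∞)`, so their product is strictly increasing. -/

theorem StrictMonoOn.mul {α M₀ : Type*} [MulZeroClass M₀] [Preorder M₀] [Preorder α]
    [PosMulStrictMono M₀] [MulPosMono M₀] {f g : α → M₀} {s : Set α}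
    (hf : StrictMonoOn f s) (hg : StrictMonoOn g s) (hf₀ : ∀ x ∈ s, 0 ≤ f x)
    (hg₀ : ∀ x ∈ s, 0 ≤ g x) : StrictMonoOn (f * g) s :=
  fun _ ha _ hb h ↦ mul_lt_mul'' (hf ha hb h) (hg ha hb h) (hf₀ _ ha) (hg₀ _ ha)

theorem strictMonoOn_one_sub_div {c : ℝ} (hc : 0 < c) :
    StrictMonoOn (fun x : ℝ ↦ 1 - c / x) (Ioi 0) :=
  fun _ ha _ _ h ↦ sub_lt_sub_left (div_lt_div_of_pos_left hc ha h) 1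

theorem strictMono_one_sub_exp_neg_div {p : ℝ} (hp : 0 < p) :
    StrictMono (fun x : ℝ ↦ 1 - exp (-x / p)) :=
  fun _ _ h ↦ sub_lt_sub_left (exp_lt_exp.2 (div_lt_div_of_pos_right (neg_lt_neg h) hp)) 1

theorem los_probability_eq (d₁ p₁ d : ℝ) :
    d₁ / d + exp (-d / p₁) * (1 - d₁ / d) = 1 - (1 - d₁ / d) * (1 - exp (-d / p₁)) := by
  ring

/-- For all parameters d₁ > 0 and p₁ > 0, the LoS probability
d ↦ d₁/d + exp(−d/p₁)(1 − d₁/d) is strictly decreasing on [d₁, ∞). -/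
theorem los_probability_strictAntiOn (d₁ p₁ : ℝ) (hd₁ : 0 < d₁) (hp₁ : 0 < p₁) :
    StrictAntiOn (fun d : ℝ => d₁ / d + Real.exp (-d / p₁) * (1 - d₁ / d))
      (Set.Ici d₁) := by
  have hpos : Ici d₁ ⊆ Ioi 0 := Ici_subset_Ioi.2 hd₁
  have hprod : StrictMonoOn
      ((fun d : ℝ ↦ 1 - d₁ / d) * fun d ↦ 1 - exp (-d / p₁)) (Ici d₁) := by
    refine ((strictMonoOn_one_sub_div hd₁).mono hpos).mul
      ((strictMono_one_sub_exp_neg_div hp₁).strictMonoOn _) (fun d hd ↦ ?_) (fun d hd ↦ ?_)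
    · rw [sub_nonneg, div_le_one (hpos hd)]
      exact hd
    · rw [sub_nonneg, exp_le_one_iff]
      exact div_nonpos_of_nonpos_of_nonneg (neg_nonpos.2 (hpos hd).le) hp₁.le
  intro a ha b hb hab
  simp only [los_probability_eq]
  exact sub_lt_sub_left (hprod ha hb hab) 1
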